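/- Let H be a finite abelian group of odd order and let G = H × ℤ₂ × ℤ₂. Suppose (A, B) is a near-factorization of G. For i, j ∈ {0, 1} let G_{i,j} = H × {i} × {j}, a_{i,j} = |A ∩ G_{i,j}| and b_{i,j} = |B ∩ G_{i,j}|. Then, as integers, (a_{0,0} − a_{0,1} + a_{1,0} − a_{1,1})·(b_{0,0} − b_{0,1} + b_{1,0} − b_{1,1}) = −1, (a_{0,0} + a_{0,1} − a_{1,0} − a_{1,1})·(b_{0,0} + b_{0,1} − b_{1,0} − b_{1,1}) = −1, and (a_{0,0} − a_{0,1} − a_{1,0} + a_{1,1})·(b_{0,0} − b_{0,1} − b_{1,0} + b_{1,1}) = −1. -/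

import Mathlib

open Finset
open scoped Pointwise

/-!
Since `|A| |B| = |G| - 1` and `A + B = G \ {0}`, the addition map `A × B → G \ {0}` is a
bijection. Hence for every nontrivial character `ψ : G → ℤ`,
`ψ(A) ψ(B) = ∑_{g ≠ 0} ψ(g) = -ψ(0) = -1`. The three claimed identities are this equation for
the three nontrivial characters `ℤ₂ × ℤ₂ → {±1}`, pulled back to `G` along the projection.
-/

theorem sum_comp_snd_eq_sum_card_filter {α β γ R : Type*} [Fintype β] [Fintype γ]
    [DecidableEq β] [DecidableEq γ] [CommSemiring R]
    (A : Finset (α × β × γ)) (c : β × γ → R) :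
    ∑ x ∈ A, c x.2 = ∑ i, ∑ j, c (i, j) * #(A.filter (fun x => x.2.1 = i ∧ x.2.2 = j)) := by
  rw [← sum_fiberwise A (fun x => x.2), Fintype.sum_prod_type]
  refine sum_congr rfl fun i _ => sum_congr rfl fun j _ => ?_
  rw [sum_congr rfl fun x hx => congrArg c (mem_filter.1 hx).2, sum_const, nsmul_eq_mul, mul_comm]
  simp only [Prod.ext_iff]

section NearFactorization

variable {G : Type*} [AddCommGroup G] [Fintype G] [DecidableEq G]

def IsNearFactorization (A B : Finset G) : Prop :=
  #A * #B = Fintype.card G - 1 ∧ A + B = univ \ {0}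

namespace IsNearFactorization

variable {A B : Finset G}

theorem injOn_add (h : IsNearFactorization A B) :
    Set.InjOn (fun p : G × G => p.1 + p.2) (A ×ˢ B : Finset (G × G)) := by
  refine Finset.injOn_of_card_image_eq ?_
  rw [Finset.image_add_product, h.2, card_product, h.1, sdiff_singleton_eq_erase,
    card_erase_of_mem (mem_univ 0), card_univ]

theorem sum_addChar_mul_sum_addChar {R : Type*} [CommRing R] [IsDomain R]
    (h : IsNearFactorization A B) {ψ : AddChar G R} (hψ : ψ ≠ 1) :
    (∑ x ∈ A, ψ x) * (∑ y ∈ B, ψ y) = -1 := by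
  have hsum : ∑ z ∈ A + B, ψ z = (∑ x ∈ A, ψ x) * (∑ y ∈ B, ψ y) := by
    rw [← Finset.image_add_product, sum_image h.injOn_add, sum_mul_sum, sum_product]
    simp only [AddChar.map_add_eq_mul]
  rw [← hsum, h.2, sdiff_singleton_eq_erase, eq_neg_iff_add_eq_zero, ← AddChar.map_zero_eq_one ψ,
    sum_erase_add _ _ (mem_univ 0), AddChar.sum_eq_zero_of_ne_one hψ]

theorem sum_sign_mul_sum_sign (h : IsNearFactorization A B) {f : G →+ ZMod 2} (hf : f ≠ 0) :
    (∑ x ∈ A, (-1 : ℤ) ^ (f x).val) * (∑ y ∈ B, (-1 : ℤ) ^ (f y).val) = -1 := by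
  have hψ : (AddChar.zmodChar 2 (neg_one_sq (R := ℤ))).compAddMonoidHom f ≠ 1 := by
    obtain ⟨x, hx⟩ := DFunLike.ne_iff.1 hf
    refine AddChar.ne_one_iff.2 ⟨x, ?_⟩
    have hx1 : f x = 1 := (by decide : ∀ t : ZMod 2, t ≠ 0 → t = 1) _ hx
    rw [AddChar.compAddMonoidHom_apply, AddChar.zmodChar_apply, hx1]
    decide
  exact h.sum_addChar_mul_sum_addChar hψ

end IsNearFactorization

end NearFactorization

theorem IsNearFactorization.fiberwise_sum_sign_mul_sum_sign {H : Type*} [AddCommGroup H] [Fintype H]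
    [DecidableEq H] {A B : Finset (H × ZMod 2 × ZMod 2)} (h : IsNearFactorization A B)
    {f : ZMod 2 × ZMod 2 →+ ZMod 2} (hf : f ≠ 0) :
    (∑ i, ∑ j, (-1 : ℤ) ^ (f (i, j)).val * #(A.filter (fun x => x.2.1 = i ∧ x.2.2 = j))) *
      (∑ i, ∑ j, (-1 : ℤ) ^ (f (i, j)).val * #(B.filter (fun x => x.2.1 = i ∧ x.2.2 = j))) =
      -1 := by
  rw [← sum_comp_snd_eq_sum_card_filter A fun y => (-1 : ℤ) ^ (f y).val,
    ← sum_comp_snd_eq_sum_card_filter B fun y => (-1 : ℤ) ^ (f y).val]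
  refine h.sum_sign_mul_sum_sign (f := f.comp (AddMonoidHom.snd H _)) fun h0 => hf ?_
  ext y; simpa using DFunLike.congr_fun h0 (0, y)

theorem near_factorization_H_Z2_Z2_products_general
    {H : Type*} [AddCommGroup H] [Fintype H] [DecidableEq H]
    (A B : Finset (H × ZMod 2 × ZMod 2))
    (hcard : A.card * B.card = Fintype.card (H × ZMod 2 × ZMod 2) - 1)
    (hsum : A + B = Finset.univ \ {0}) :
    letI a : ZMod 2 → ZMod 2 → ℤ := fun i j =>
      ((A.filter (fun x => x.2.1 = i ∧ x.2.2 = j)).card : ℤ)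
    letI b : ZMod 2 → ZMod 2 → ℤ := fun i j =>
      ((B.filter (fun x => x.2.1 = i ∧ x.2.2 = j)).card : ℤ)
    (a 0 0 - a 0 1 + a 1 0 - a 1 1) * (b 0 0 - b 0 1 + b 1 0 - b 1 1) = -1 ∧
    (a 0 0 + a 0 1 - a 1 0 - a 1 1) * (b 0 0 + b 0 1 - b 1 0 - b 1 1) = -1 ∧
    (a 0 0 - a 0 1 - a 1 0 + a 1 1) * (b 0 0 - b 0 1 - b 1 0 + b 1 1) = -1 := by
  have h : IsNearFactorization A B := ⟨hcard, hsum⟩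
  have sum_zmod_two (g : ZMod 2 → ℤ) : ∑ i, g i = g 0 + g 1 := Fin.sum_univ_two g
  have key (f : ZMod 2 × ZMod 2 →+ ZMod 2) (hf : f ≠ 0) := h.fiberwise_sum_sign_mul_sum_sign hf
  simp only [sum_zmod_two] at key
  have h1 := key (AddMonoidHom.snd _ _) (by decide)
  have h2 := key (AddMonoidHom.fst _ _) (by decide)
  have h3 := key (AddMonoidHom.fst _ _ + AddMonoidHom.snd _ _) (by decide)
  have hval0 : (-1 : ℤ) ^ (0 : ZMod 2).val = 1 := rfl
  have hval1 : (-1 : ℤ) ^ (1 : ZMod 2).val = -1 := rfl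
  have h11 : (1 + 1 : ZMod 2) = 0 := rfl
  simp only [AddMonoidHom.add_apply, AddMonoidHom.coe_fst, AddMonoidHom.coe_snd, add_zero,
    zero_add, h11, hval0, hval1] at h1 h2 h3
  exact ⟨by linear_combination h1, by linear_combination h2, by linear_combination h3⟩

theorem near_factorization_H_Z2_Z2_products
    {H : Type*} [AddCommGroup H] [Fintype H] [DecidableEq H]
    (hodd : Odd (Fintype.card H))
    (A B : Finset (H × ZMod 2 × ZMod 2))
    (hcard : A.card * B.card = Fintype.card (H × ZMod 2 × ZMod 2) - 1)
    (hsum : A + B = Finset.univ \ {0}) :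
    letI a : ZMod 2 → ZMod 2 → ℤ := fun i j =>
      ((A.filter (fun x => x.2.1 = i ∧ x.2.2 = j)).card : ℤ)
    letI b : ZMod 2 → ZMod 2 → ℤ := fun i j =>
      ((B.filter (fun x => x.2.1 = i ∧ x.2.2 = j)).card : ℤ)
    (a 0 0 - a 0 1 + a 1 0 - a 1 1) * (b 0 0 - b 0 1 + b 1 0 - b 1 1) = -1 ∧
    (a 0 0 + a 0 1 - a 1 0 - a 1 1) * (b 0 0 + b 0 1 - b 1 0 - b 1 1) = -1 ∧
    (a 0 0 - a 0 1 - a 1 0 + a 1 1) * (b 0 0 - b 0 1 - b 1 0 + b 1 1) = -1 :=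
  near_factorization_H_Z2_Z2_products_general A B hcard hsum
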